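/- arXiv:2307.14300 — 5 statements merged into one kernel-verified Lean document; each statement's English description precedes it below -/
import Mathlib

section
/- Let q = p^m and let C be an [n, k] linear code over F_p. There exists a tuple D = (d_1, ..., d_n) ∈ F_q^n such that C = C_D := { (Tr_{q/p}(x·d_i))_{i=1..n} : x ∈ F_q } if and only if m ≥ k. -/
/-!
`C_D` is the range of the linear map `x ↦ (Tr(x·d_i))_i` from `F_q` to `F_p^n`. Since the trace
form is nondegenerate, every `F_p`-linear map `F_q → F_p^n` arises this way for a unique `D`, so the
codes `C_D` are exactly the ranges of linear maps from an `m`-dimensional space, i.e. the subspaces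
of dimension at most `m`.
-/

open Module Function

namespace LinearMap

variable {K V U : Type*} [DivisionRing K] [AddCommGroup V] [Module K V] [AddCommGroup U]
  [Module K U] [FiniteDimensional K V] [FiniteDimensional K U]

theorem exists_surjective_of_finrank_le (h : finrank K U ≤ finrank K V) :
    ∃ f : V →ₗ[K] U, Surjective f :=
  ⟨(finBasis K U).equivFun.symm.toLinearMap ∘ₗ funLeft K K (Fin.castLE h) ∘ₗ
      (finBasis K V).equivFun.toLinearMap,
    (finBasis K U).equivFun.symm.surjective.comp <|
      (funLeft_surjective_of_injective K K _ (Fin.castLE_injective h)).comp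
        (finBasis K V).equivFun.surjective⟩

theorem exists_range_eq_iff_finrank_le (C : Submodule K U) :
    (∃ f : V →ₗ[K] U, range f = C) ↔ finrank K C ≤ finrank K V := by
  constructor
  · rintro ⟨f, rfl⟩
    exact finrank_range_le f
  · intro h
    obtain ⟨f, hf⟩ := exists_surjective_of_finrank_le h
    exact ⟨C.subtype ∘ₗ f, by rw [range_comp, range_eq_top.mpr hf, Submodule.map_top,
      Submodule.range_subtype]⟩

end LinearMap

namespace Algebra

variable (K L : Type*) [Field K] [Field L] [Algebra K L] {ι : Type*}

noncomputable def traceCodeMap (d : ι → L) : L →ₗ[K] (ι → K) :=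
  LinearMap.pi fun i => (traceForm K L).flip (d i)

theorem traceCodeMap_apply (d : ι → L) (x : L) (i : ι) :
    traceCodeMap K L d x i = trace K L (x * d i) :=
  rfl

theorem coe_range_traceCodeMap (d : ι → L) :
    (LinearMap.range (traceCodeMap K L d) : Set (ι → K)) =
      {v | ∃ x : L, v = fun i => trace K L (x * d i)} := by
  ext v
  exact exists_congr fun x => eq_comm

theorem traceCodeMap_surjective [FiniteDimensional K L] [Algebra.IsSeparable K L] :
    Surjective (traceCodeMap K L : (ι → L) → L →ₗ[K] (ι → K)) := by
  intro f
  let e := (traceForm K L).toDual (traceForm_nondegenerate K L)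
  refine ⟨fun i => e.symm (LinearMap.proj i ∘ₗ f), LinearMap.ext fun x => funext fun i => ?_⟩
  rw [traceCodeMap_apply, mul_comm, ← traceForm_apply,
    LinearMap.BilinForm.apply_toDual_symm_apply]
  rfl

theorem exists_range_traceCodeMap_eq_iff [FiniteDimensional K L] [Algebra.IsSeparable K L]
    [Finite ι] (C : Submodule K (ι → K)) :
    (∃ d : ι → L, LinearMap.range (traceCodeMap K L d) = C) ↔ finrank K C ≤ finrank K L := by
  rw [← LinearMap.exists_range_eq_iff_finrank_le]
  exact ((traceCodeMap_surjective K L).exists (p := fun f => LinearMap.range f = C)).symm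

end Algebra

/-- An `[n,k]` linear code `C` over `𝔽_p` is realizable as a second
generic construction code `C_D` with defining tuple `D ∈ 𝔽_q^n`, `q = p^m`, iff `m ≥ k`. -/
theorem second_generic_construction_realizable_iff
    (p m n k : ℕ) [Fact p.Prime] (hm : 0 < m)
    (C : Submodule (ZMod p) (Fin n → ZMod p))
    (hk : Module.finrank (ZMod p) C = k) :
    (∃ d : Fin n → GaloisField p m,
        (C : Set (Fin n → ZMod p)) =
          {v | ∃ x : GaloisField p m,
              v = fun i => Algebra.trace (ZMod p) (GaloisField p m) (x * d i)}) ↔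
      k ≤ m := by
  simp_rw [← Algebra.coe_range_traceCodeMap, SetLike.coe_set_eq, eq_comm (a := C)]
  rw [Algebra.exists_range_traceCodeMap_eq_iff, hk, GaloisField.finrank p hm.ne']
end

section
/- Let q = p^m and D = {d_1, ..., d_n} ⊆ F_q with code C_D. Define the F_p-linear map φ : C_D → F_q by φ(c_x) = ∑_{i=1}^n Tr_{q/p}(x·d_i)·d_i, where c_x = (Tr(x·d_1),...,Tr(x·d_n)). Then Hull(C_D) = ker(φ), and consequently dim Hull(C_D) = dim C_D − rank(φ). -/
open scoped BigOperators

def dualSub {K : Type*} [Field K] {n : ℕ} (C : Submodule K (Fin n → K)) :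
    Submodule K (Fin n → K) where
  carrier := {v | ∀ c ∈ C, ∑ i, v i * c i = 0}
  add_mem' := by
    intro a b ha hb c hc
    simp only [Set.mem_setOf_eq, Pi.add_apply] at *
    simp [add_mul, Finset.sum_add_distrib, ha c hc, hb c hc]
  zero_mem' := by intro c hc; simp
  smul_mem' := by
    intro r a ha c hc
    simp only [Set.mem_setOf_eq, Pi.smul_apply, smul_eq_mul] at *
    simp [mul_assoc, ← Finset.mul_sum, ha c hc]

noncomputable def traceCodeMap (p m n : ℕ) [Fact p.Prime] (d : Fin n → GaloisField p m) :
    GaloisField p m →ₗ[ZMod p] (Fin n → ZMod p) :=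
  LinearMap.pi fun i =>
    (Algebra.trace (ZMod p) (GaloisField p m)).comp (LinearMap.mulRight (ZMod p) (d i))

/-- The `𝔽_p`-linear map `x ↦ ∑ᵢ Tr(x·dᵢ)·dᵢ`, whose value on `x` only depends on the
codeword `c_x`, so that it induces the map `φ : C_D → 𝔽_q` of the statement. -/
noncomputable def hullMap (p m n : ℕ) [Fact p.Prime] (d : Fin n → GaloisField p m) :
    GaloisField p m →ₗ[ZMod p] GaloisField p m where
  toFun x := ∑ i, Algebra.trace (ZMod p) (GaloisField p m) (x * d i) • d i
  map_add' x y := by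
    simp [add_mul, map_add, add_smul, Finset.sum_add_distrib]
  map_smul' r x := by
    simp only [smul_mul_assoc, map_smul, RingHom.id_apply, Finset.smul_sum, smul_smul,
      smul_eq_mul]

/-!
Writing `T x = c_x` and `H x = ∑ᵢ Tr(x dᵢ) dᵢ`, one has `Tr(H x · y) = ∑ᵢ (c_x)ᵢ (c_y)ᵢ`. So `c_x`
is orthogonal to the whole code exactly when `H x` is orthogonal to all of `𝔽_q` for the trace
form, i.e. when `H x = 0` by nondegeneracy. Hence `Hull(C_D) = T (ker H)`, and since
`ker T ≤ ker H`, rank–nullity gives `dim Hull(C_D) = (m - rank H) - (m - rank T)`.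
-/
open Module LinearMap

theorem Submodule.finrank_map_of_ker_le {K V W : Type*} [Field K] [AddCommGroup V] [Module K V]
    [AddCommGroup W] [Module K W] [FiniteDimensional K V] (f : V →ₗ[K] W) {S : Submodule K V}
    (hS : ker f ≤ S) :
    finrank K (S.map f) = finrank K S - finrank K (ker f) := by
  have hrank := (f.domRestrict S).finrank_range_add_finrank_ker
  rw [range_domRestrict, ker_domRestrict,
    (Submodule.comapSubtypeEquivOfLe hS).finrank_eq] at hrank
  omega

section GramOperator

variable {K V : Type*} [Field K] [AddCommGroup V] [Module K V] {n : ℕ}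
  {T : V →ₗ[K] (Fin n → K)} {H : V →ₗ[K] V} {B : LinearMap.BilinForm K V}

theorem mem_dualSub_range_iff (hB : B.Nondegenerate)
    (hTH : ∀ x y, B (H x) y = ∑ i, T x i * T y i) (x : V) :
    T x ∈ dualSub (range T) ↔ H x = 0 := by
  refine ⟨fun hx => hB.1 _ fun y => ?_, fun hx => ?_⟩
  · rw [hTH, hx _ (mem_range_self T y)]
  · rintro _ ⟨y, rfl⟩
    rw [← hTH, hx, map_zero, LinearMap.zero_apply]

theorem ker_le_ker_of_nondegenerate (hB : B.Nondegenerate)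
    (hTH : ∀ x y, B (H x) y = ∑ i, T x i * T y i) : ker T ≤ ker H := fun x hx =>
  (mem_dualSub_range_iff hB hTH x).1 (by rw [mem_ker.1 hx]; exact zero_mem _)

theorem range_inf_dualSub_range_eq_map_ker (hB : B.Nondegenerate)
    (hTH : ∀ x y, B (H x) y = ∑ i, T x i * T y i) :
    range T ⊓ dualSub (range T) = (ker H).map T := by
  ext v
  constructor
  · rintro ⟨⟨x, rfl⟩, hx⟩
    exact ⟨x, (mem_dualSub_range_iff hB hTH x).1 hx, rfl⟩
  · rintro ⟨x, hx, rfl⟩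
    exact ⟨mem_range_self T x, (mem_dualSub_range_iff hB hTH x).2 hx⟩

theorem finrank_range_inf_dualSub_range [FiniteDimensional K V] (hB : B.Nondegenerate)
    (hTH : ∀ x y, B (H x) y = ∑ i, T x i * T y i) :
    finrank K (range T ⊓ dualSub (range T) : Submodule K (Fin n → K)) =
      finrank K (range T) - finrank K (range H) := by
  rw [range_inf_dualSub_range_eq_map_ker hB hTH,
    Submodule.finrank_map_of_ker_le T (ker_le_ker_of_nondegenerate hB hTH)]
  have hT := T.finrank_range_add_finrank_ker
  have hH := H.finrank_range_add_finrank_ker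
  omega

end GramOperator

theorem trace_hullMap_mul (p m n : ℕ) [Fact p.Prime] (d : Fin n → GaloisField p m)
    (x y : GaloisField p m) :
    Algebra.trace (ZMod p) (GaloisField p m) (hullMap p m n d x * y) =
      ∑ i, traceCodeMap p m n d x i * traceCodeMap p m n d y i := by
  simp only [hullMap, coe_mk, AddHom.coe_mk, Finset.sum_mul, smul_mul_assoc, map_sum, map_smul,
    smul_eq_mul, traceCodeMap, pi_apply, comp_apply, mulRight_apply, mul_comm (d _) y]

theorem hull_eq_ker_and_dim_general
    (p m n : ℕ) [Fact p.Prime]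
    (d : Fin n → GaloisField p m) :
    (∀ x : GaloisField p m,
      (traceCodeMap p m n d x ∈
          LinearMap.range (traceCodeMap p m n d) ⊓
            dualSub (LinearMap.range (traceCodeMap p m n d)) ↔
        hullMap p m n d x = 0)) ∧
    Module.finrank (ZMod p)
        (LinearMap.range (traceCodeMap p m n d) ⊓
          dualSub (LinearMap.range (traceCodeMap p m n d)) :
          Submodule (ZMod p) (Fin n → ZMod p)) =
      Module.finrank (ZMod p) (LinearMap.range (traceCodeMap p m n d)) -
        Module.finrank (ZMod p) (LinearMap.range (hullMap p m n d)) := by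
  have hB := traceForm_nondegenerate (ZMod p) (GaloisField p m)
  have hTH : ∀ x y, Algebra.traceForm (ZMod p) (GaloisField p m) (hullMap p m n d x) y =
      ∑ i, traceCodeMap p m n d x i * traceCodeMap p m n d y i :=
    trace_hullMap_mul p m n d
  refine ⟨fun x => ?_, finrank_range_inf_dualSub_range hB hTH⟩
  rw [Submodule.mem_inf, mem_dualSub_range_iff hB hTH]
  exact and_iff_right (mem_range_self _ x)

/-- `Hull(C_D) = ker φ` where `φ(c_x) = ∑ᵢ Tr(x·dᵢ)·dᵢ`, and consequently
`dim Hull(C_D) = dim C_D − rank φ`. -/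
theorem hull_eq_ker_and_dim
    (p m n : ℕ) [Fact p.Prime] (hm : 0 < m)
    (d : Fin n → GaloisField p m) :
    (∀ x : GaloisField p m,
      (traceCodeMap p m n d x ∈
          LinearMap.range (traceCodeMap p m n d) ⊓
            dualSub (LinearMap.range (traceCodeMap p m n d)) ↔
        hullMap p m n d x = 0)) ∧
    Module.finrank (ZMod p)
        (LinearMap.range (traceCodeMap p m n d) ⊓
          dualSub (LinearMap.range (traceCodeMap p m n d)) :
          Submodule (ZMod p) (Fin n → ZMod p)) =
      Module.finrank (ZMod p) (LinearMap.range (traceCodeMap p m n d)) -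
        Module.finrank (ZMod p) (LinearMap.range (hullMap p m n d)) :=
  hull_eq_ker_and_dim_general p m n d
end

section
/- In the setting of the fixed-Hull-dimension construction (D = (d_1,...,d_k, α d_1,...,α d_l, β d_{l+1},...,β d_k) with d_i linearly independent over F_p, α²=−1, β²≠−1), a codeword c_x lies in Hull(C_D) if and only if Tr_{q/p}(x·d_i) = 0 for all i = l+1, ..., k. -/
/- With `T = Tr_{q/p}`, the word `c_x` is orthogonal to every `c_y` iff `T(S y) = 0` for all
`y`, where `S = ∑ᵢ T(x dᵢ) dᵢ`; by nondegeneracy of the trace form this means `S = 0`.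
Writing the second half of `D` as `cⱼ dⱼ`, the coefficient of `dⱼ` in `S` is
`(1 + cⱼ²) T(x dⱼ)`, so linear independence of the `dⱼ` makes `S = 0` equivalent to
`T(x dⱼ) = 0` whenever `1 + cⱼ² ≠ 0`, which is the case exactly for `cⱼ = β`. -/

open scoped BigOperators

def dualSet {K : Type*} [Field K] {n : ℕ} (C : Set (Fin n → K)) : Set (Fin n → K) :=
  {v | ∀ c ∈ C, ∑ i, v i * c i = 0}

def traceCodeSet (p m n : ℕ) [Fact p.Prime] (d : Fin n → GaloisField p m) :
    Set (Fin n → ZMod p) :=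
  {v | ∃ x : GaloisField p m,
      v = fun i => Algebra.trace (ZMod p) (GaloisField p m) (x * d i)}

/-- The defining tuple `D = (d₁,…,d_k, α d₁,…,α d_l, β d_{l+1},…,β d_k)`. -/
noncomputable def fixedHullTuple (p m k l : ℕ) [Fact p.Prime]
    (d : Fin k → GaloisField p m) (α β : ZMod p) : Fin (k + k) → GaloisField p m :=
  Fin.append d fun j =>
    if (j : ℕ) < l then algebraMap (ZMod p) (GaloisField p m) α * d j
    else algebraMap (ZMod p) (GaloisField p m) β * d j

open Algebra

theorem sum_trace_mul_trace_eq_trace_mul {K L ι : Type*} [CommRing K] [CommRing L] [Algebra K L]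
    [Fintype ι] (D : ι → L) (x y : L) :
    ∑ i, trace K L (x * D i) * trace K L (y * D i) =
      trace K L ((∑ i, trace K L (x * D i) • D i) * y) := by
  rw [Finset.sum_mul, map_sum]
  refine Finset.sum_congr rfl fun i _ => ?_
  rw [smul_mul_assoc, map_smul, smul_eq_mul, mul_comm (D i) y]

theorem sum_trace_smul_append_smul {K L : Type*} [CommRing K] [CommRing L] [Algebra K L] {k : ℕ}
    (d : Fin k → L) (c : Fin k → K) (x : L) :
    ∑ i, trace K L (x * Fin.append d (fun j => c j • d j) i) • Fin.append d (fun j => c j • d j) i =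
      ∑ j, ((1 + c j ^ 2) * trace K L (x * d j)) • d j := by
  rw [Fin.sum_univ_add, ← Finset.sum_add_distrib]
  refine Finset.sum_congr rfl fun j _ => ?_
  rw [Fin.append_left, Fin.append_right, mul_smul_comm, map_smul, smul_eq_mul, smul_smul,
    ← add_smul]
  congr 1
  ring

theorem mem_dualSet_traceCodeSet_iff (p m n : ℕ) [Fact p.Prime] (D : Fin n → GaloisField p m)
    (x : GaloisField p m) :
    (fun i => trace (ZMod p) (GaloisField p m) (x * D i)) ∈ dualSet (traceCodeSet p m n D) ↔
      ∑ i, trace (ZMod p) (GaloisField p m) (x * D i) • D i = 0 := by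
  constructor
  · intro h
    refine (traceForm_nondegenerate (ZMod p) (GaloisField p m)).1 _ fun y => ?_
    rw [traceForm_apply, ← sum_trace_mul_trace_eq_trace_mul]
    exact h _ ⟨y, rfl⟩
  · rintro h _ ⟨y, rfl⟩
    rw [sum_trace_mul_trace_eq_trace_mul, h, zero_mul, map_zero]

theorem fixedHullTuple_eq_append (p m k l : ℕ) [Fact p.Prime] (d : Fin k → GaloisField p m)
    (α β : ZMod p) :
    fixedHullTuple p m k l d α β = Fin.append d fun j => (if (j : ℕ) < l then α else β) • d j := by
  unfold fixedHullTuple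
  congr 1
  funext j
  split_ifs <;> rw [Algebra.smul_def]

theorem LinearIndependent.sum_smul_eq_zero_iff {R M ι : Type*} [Ring R] [AddCommGroup M]
    [Module R M] [Fintype ι] {v : ι → M} (hv : LinearIndependent R v) (g : ι → R) :
    ∑ i, g i • v i = 0 ↔ ∀ i, g i = 0 :=
  ⟨Fintype.linearIndependent_iff.mp hv g, fun h => by simp [h]⟩

theorem fixedHull_membership_general
    (p m k l : ℕ) [Fact p.Prime]
    (α β : ZMod p) (hα : α ^ 2 = -1) (hβ : β ^ 2 ≠ -1)
    (d : Fin k → GaloisField p m) (hli : LinearIndependent (ZMod p) d)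
    (x : GaloisField p m) :
    ((fun i => Algebra.trace (ZMod p) (GaloisField p m) (x * fixedHullTuple p m k l d α β i)) ∈
        traceCodeSet p m (k + k) (fixedHullTuple p m k l d α β) ∩
          dualSet (traceCodeSet p m (k + k) (fixedHullTuple p m k l d α β))) ↔
      ∀ i : Fin k, l ≤ (i : ℕ) →
        Algebra.trace (ZMod p) (GaloisField p m) (x * d i) = 0 := by
  rw [Set.mem_inter_iff, and_iff_right ⟨x, rfl⟩, mem_dualSet_traceCodeSet_iff,
    fixedHullTuple_eq_append, sum_trace_smul_append_smul, hli.sum_smul_eq_zero_iff]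
  refine forall_congr' fun j => ?_
  split_ifs with hj
  · have hα' : 1 + α ^ 2 = 0 := by rw [hα]; ring
    simp [hα', hj]
  · have hβ' : 1 + β ^ 2 ≠ 0 := fun h => hβ (by linear_combination h)
    simp [hβ', le_of_not_gt hj]

/-- In the fixed-Hull-dimension construction, the codeword `c_x` lies in
`Hull(C_D)` iff `Tr(x·dᵢ) = 0` for all `i = l+1,…,k`. -/
theorem fixedHull_membership
    (p m k l : ℕ) [Fact p.Prime] (hm : 0 < m) (hp : Odd p) (hl : l ≤ k)
    (α β : ZMod p) (hα : α ^ 2 = -1) (hβ : β ^ 2 ≠ -1)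
    (d : Fin k → GaloisField p m) (hli : LinearIndependent (ZMod p) d)
    (x : GaloisField p m) :
    ((fun i => Algebra.trace (ZMod p) (GaloisField p m) (x * fixedHullTuple p m k l d α β i)) ∈
        traceCodeSet p m (k + k) (fixedHullTuple p m k l d α β) ∩
          dualSet (traceCodeSet p m (k + k) (fixedHullTuple p m k l d α β))) ↔
      ∀ i : Fin k, l ≤ (i : ℕ) →
        Algebra.trace (ZMod p) (GaloisField p m) (x * d i) = 0 :=
  fixedHull_membership_general p m k l α β hα hβ d hli x
end

section
/- Let q = 2^a and r = q^b. Let k be even and d_1, ..., d_k ∈ F_r be linearly independent over F_q. Let D = (d_1, ..., d_k, d_1+d_2, d_3+d_4, ..., d_{k-1}+d_k). Then C_D = { (Tr_{r/q}(x·d))_{d∈D} : x ∈ F_r } is an LCD code (i.e., Hull(C_D) = {0}) of length 3k/2 and dimension k over F_q. -/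
open scoped BigOperators

/-- The code `C_D ⊆ 𝔽_q^n` from a defining tuple `D ∈ 𝔽_r^n`, via the relative trace. -/
noncomputable def relTraceCodeMap (K L : Type*) [Field K] [Field L] [Algebra K L]
    [FiniteDimensional K L] {n : ℕ} (e : Fin n → L) : L →ₗ[K] (Fin n → K) :=
  LinearMap.pi fun i => (Algebra.trace K L).comp (LinearMap.mulRight K (e i))

/-- The defining tuple `D = (d₁,…,d_k, d₁+d₂, d₃+d₄, …, d_{k−1}+d_k)` with `k = 2s`. -/
def lcdTuple {L : Type*} [Field L] (s : ℕ) (d : Fin (2 * s) → L) :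
    Fin (2 * s + s) → L :=
  Fin.append d fun j =>
    d ⟨2 * (j : ℕ), by have := j.isLt; omega⟩ + d ⟨2 * (j : ℕ) + 1, by have := j.isLt; omega⟩

/-!
Write `a = (Tr(x dᵢ))ᵢ`. The codeword `c_x` is `a` followed by the pair sums `a₂ⱼ + a₂ⱼ₊₁`, so it
vanishes iff `a` does, and nondegeneracy of the trace form shows that `a` ranges over all of
`𝔽_q^k` when the `dᵢ` are independent: this gives the dimension. The same nondegeneracy puts
`c_x` in `C_D^⊥` iff `∑ (c_x)ᵢ Dᵢ = 0`. In characteristic 2,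
`a₀d₀ + a₁d₁ + (a₀ + a₁)(d₀ + d₁) = a₁d₀ + a₀d₁`, so this sum is `∑ a_{σ i} dᵢ` with `σ`
swapping `2j` and `2j + 1`; independence of the `dᵢ` forces `a = 0`, hence `c_x = 0`.
-/

section
variable {K L : Type*} [Field K] [Field L] [Algebra K L] [FiniteDimensional K L] {n : ℕ}

theorem relTraceCodeMap_apply (e : Fin n → L) (x : L) (i : Fin n) :
    relTraceCodeMap K L e x i = Algebra.trace K L (x * e i) := rfl

theorem sum_mul_relTraceCodeMap (c : Fin n → K) (e : Fin n → L) (x : L) :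
    ∑ i, c i * relTraceCodeMap K L e x i = Algebra.trace K L (x * ∑ i, c i • e i) := by
  simp only [relTraceCodeMap_apply, Finset.mul_sum, map_sum, mul_smul_comm, map_smul,
    smul_eq_mul]

theorem mem_dualSub_range_relTraceCodeMap_iff [Algebra.IsSeparable K L] (e : Fin n → L)
    (c : Fin n → K) :
    c ∈ dualSub (LinearMap.range (relTraceCodeMap K L e)) ↔ ∑ i, c i • e i = 0 := by
  refine ⟨fun h => (traceForm_nondegenerate K L).2 _ fun y => ?_, ?_⟩
  · rw [Algebra.traceForm_apply, ← sum_mul_relTraceCodeMap]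
    exact h _ ⟨y, rfl⟩
  · rintro h _ ⟨y, rfl⟩
    rw [sum_mul_relTraceCodeMap, h, mul_zero, map_zero]

theorem relTraceCodeMap_surjective [Algebra.IsSeparable K L] {e : Fin n → L}
    (he : LinearIndependent K e) : Function.Surjective (relTraceCodeMap K L e) := by
  rw [← LinearMap.dualMap_injective_iff, injective_iff_map_eq_zero]
  intro φ hφ
  set c : Fin n → K := fun i => φ fun j => if i = j then 1 else 0
  have hφc (v : Fin n → K) : φ v = ∑ i, c i * v i := by
    simp only [φ.pi_apply_eq_sum_univ v, smul_eq_mul, mul_comm, c]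
  have hc : c ∈ dualSub (LinearMap.range (relTraceCodeMap K L e)) := by
    rintro _ ⟨x, rfl⟩
    rw [← hφc]
    exact LinearMap.congr_fun hφ x
  have hc0 := Fintype.linearIndependent_iff.mp he c
    ((mem_dualSub_range_relTraceCodeMap_iff e c).mp hc)
  ext v
  simp [hφc, hc0]

theorem relTraceCodeMap_append {m : ℕ} (e₁ : Fin n → L) (e₂ : Fin m → L) (x : L) :
    relTraceCodeMap K L (Fin.append e₁ e₂) x =
      Fin.append (relTraceCodeMap K L e₁ x) (relTraceCodeMap K L e₂ x) := by
  funext i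
  refine Fin.addCases (fun i => ?_) (fun i => ?_) i <;> simp [relTraceCodeMap_apply]

end

section
variable {s : ℕ}

def pairIndex (s : ℕ) : Fin s × Fin 2 ≃ Fin (2 * s) :=
  finProdFinEquiv.trans (finCongr (Nat.mul_comm s 2))

@[simp]
theorem pairIndex_apply_val (p : Fin s × Fin 2) : (pairIndex s p : ℕ) = p.2 + 2 * p.1 := rfl

def pairSum {M : Type*} [Add M] (f : Fin (2 * s) → M) (j : Fin s) : M :=
  f (pairIndex s (j, 0)) + f (pairIndex s (j, 1))

theorem sum_pairSum {M : Type*} [AddCommMonoid M] (f : Fin (2 * s) → M) :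
    ∑ j, pairSum f j = ∑ i, f i := by
  rw [← (pairIndex s).sum_comp, Fintype.sum_prod_type]
  simp only [Fin.sum_univ_two, pairSum]

theorem lcdTuple_eq_append {L : Type*} [Field L] (d : Fin (2 * s) → L) :
    lcdTuple s d = Fin.append d (pairSum d) := by
  unfold lcdTuple pairSum
  congr 1
  funext j
  congr 2 <;> ext <;> simp [Nat.add_comm]

theorem append_pairSum_eq_zero_iff {M : Type*} [AddMonoid M] (a : Fin (2 * s) → M) :
    Fin.append a (pairSum a) = 0 ↔ a = 0 := by
  refine ⟨fun h => funext fun i => by simpa using congrFun h (Fin.castAdd s i), ?_⟩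
  rintro rfl
  funext i
  refine Fin.addCases (fun i => ?_) (fun j => ?_) i <;> simp [pairSum]

def pairSwap (s : ℕ) : Equiv.Perm (Fin (2 * s)) :=
  (pairIndex s).permCongr (Equiv.prodCongr (Equiv.refl _) Fin.revPerm)

@[simp]
theorem pairSwap_pairIndex (j : Fin s) (b : Fin 2) :
    pairSwap s (pairIndex s (j, b)) = pairIndex s (j, b.rev) := by
  simp [pairSwap, Equiv.permCongr_apply]

theorem smul_add_smul_add_add_smul_add {K M : Type*} [CommRing K] [CharP K 2] [AddCommGroup M]
    [Module K M] (a₀ a₁ : K) (m₀ m₁ : M) :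
    a₀ • m₀ + a₁ • m₁ + (a₀ + a₁) • (m₀ + m₁) = a₁ • m₀ + a₀ • m₁ := by
  have h2 : (2 : K) = 0 := CharTwo.two_eq_zero
  linear_combination (norm := module) h2 • (a₀ • m₀ + a₁ • m₁)

theorem sum_append_pairSum_smul {K M : Type*} [CommRing K] [CharP K 2] [AddCommGroup M]
    [Module K M] (a : Fin (2 * s) → K) (m : Fin (2 * s) → M) :
    ∑ i, Fin.append a (pairSum a) i • Fin.append m (pairSum m) i = ∑ i, a (pairSwap s i) • m i := by
  rw [Fin.sum_univ_add, ← sum_pairSum, ← sum_pairSum, ← Finset.sum_add_distrib]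
  simp only [Fin.append_left, Fin.append_right, pairSum, pairSwap_pairIndex]
  refine Finset.sum_congr rfl fun j _ => ?_
  rw [smul_add_smul_add_add_smul_add]
  rfl

end

section
variable {K L : Type*} [Field K] [Field L] [Algebra K L] [FiniteDimensional K L] {s : ℕ}

theorem relTraceCodeMap_pairSum (d : Fin (2 * s) → L) (x : L) :
    relTraceCodeMap K L (pairSum d) x = pairSum (relTraceCodeMap K L d x) := by
  funext j
  simp only [relTraceCodeMap_apply, pairSum, mul_add, map_add]

theorem relTraceCodeMap_lcdTuple (d : Fin (2 * s) → L) (x : L) :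
    relTraceCodeMap K L (lcdTuple s d) x =
      Fin.append (relTraceCodeMap K L d x) (pairSum (relTraceCodeMap K L d x)) := by
  rw [lcdTuple_eq_append, relTraceCodeMap_append, relTraceCodeMap_pairSum]

theorem ker_relTraceCodeMap_lcdTuple (d : Fin (2 * s) → L) :
    LinearMap.ker (relTraceCodeMap K L (lcdTuple s d)) = LinearMap.ker (relTraceCodeMap K L d) := by
  ext x
  simp only [LinearMap.mem_ker, relTraceCodeMap_lcdTuple, append_pairSum_eq_zero_iff]

end

theorem lcd_construction_char_two_general
    (K L : Type*) [Field K] [Fintype K] [Field L] [Algebra K L]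
    [FiniteDimensional K L] [CharP K 2]
    (s : ℕ) (d : Fin (2 * s) → L) (hli : LinearIndependent K d) :
    LinearMap.range (relTraceCodeMap K L (lcdTuple s d)) ⊓
        dualSub (LinearMap.range (relTraceCodeMap K L (lcdTuple s d))) = ⊥ ∧
    Module.finrank K (LinearMap.range (relTraceCodeMap K L (lcdTuple s d))) = 2 * s := by
  constructor
  · rw [eq_bot_iff]
    rintro _ ⟨⟨x, rfl⟩, hx⟩
    rw [SetLike.mem_coe, mem_dualSub_range_relTraceCodeMap_iff, relTraceCodeMap_lcdTuple,
      lcdTuple_eq_append, sum_append_pairSum_smul] at hx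
    have hswap := Fintype.linearIndependent_iff.mp hli _ hx
    rw [Submodule.mem_bot, relTraceCodeMap_lcdTuple, append_pairSum_eq_zero_iff]
    funext i
    simpa using hswap ((pairSwap s).symm i)
  · have hrank := (relTraceCodeMap K L (lcdTuple s d)).finrank_range_add_finrank_ker
    have hrank_d := (relTraceCodeMap K L d).finrank_range_add_finrank_ker
    rw [LinearMap.range_eq_top.mpr (relTraceCodeMap_surjective hli), finrank_top,
      Module.finrank_fin_fun] at hrank_d
    rw [ker_relTraceCodeMap_lcdTuple] at hrank
    omega

/-- In characteristic 2, with `d₁,…,d_k ∈ 𝔽_r` (`k = 2s` even) linearly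
independent over `𝔽_q` and `D = (d₁,…,d_k, d₁+d₂, …, d_{k−1}+d_k)`, the code `C_D` is an
LCD code of length `3k/2` and dimension `k` over `𝔽_q`. -/
theorem lcd_construction_char_two
    (K L : Type*) [Field K] [Fintype K] [Field L] [Fintype L] [Algebra K L]
    [FiniteDimensional K L] [CharP K 2]
    (s : ℕ) (d : Fin (2 * s) → L) (hli : LinearIndependent K d) :
    LinearMap.range (relTraceCodeMap K L (lcdTuple s d)) ⊓
        dualSub (LinearMap.range (relTraceCodeMap K L (lcdTuple s d))) = ⊥ ∧
    Module.finrank K (LinearMap.range (relTraceCodeMap K L (lcdTuple s d))) = 2 * s :=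
  lcd_construction_char_two_general K L s d hli
end

section
/- Let q = p^m and let d_1, ..., d_k ∈ F_q be linearly independent over F_p, with p > k ≥ 1. Choose pairwise distinct nonzero α_1, ..., α_k ∈ F_p, and set d_{k+1} = ∑ α_i d_i and d_{k+2} = ∑ d_i. Then C_D with D = (d_1, ..., d_{k+2}) is a [k+2, k, 3] MDS linear code over F_p. -/
open scoped BigOperators

/-- The defining tuple `D = (d₁,…,d_k, ∑ αᵢ dᵢ, ∑ dᵢ)`. -/
noncomputable def mdsTuple (p m k : ℕ) [Fact p.Prime]
    (d : Fin k → GaloisField p m) (α : Fin k → ZMod p) :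
    Fin (k + 1 + 1) → GaloisField p m :=
  Fin.snoc (Fin.snoc d (∑ i, algebraMap (ZMod p) (GaloisField p m) (α i) * d i)) (∑ i, d i)

/-! The code `C_D` is the image of `x ↦ (Tr(x dᵢ))ᵢ`. As the trace form of `𝔽_q/𝔽_p` is
nondegenerate and `d₁, …, d_k` are independent, `x ↦ (Tr(x dᵢ))_{i ≤ k}` maps onto `𝔽_p^k`, and by
linearity of the trace the last two coordinates are `∑ αᵢ yᵢ` and `∑ yᵢ`: `C_D` is the systematic
code with generator matrix `[I | α | 1]`. Its parity checks `(α, -1, 0)` and `(1, 0, -1)` have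
pairwise independent columns, so no nonzero codeword is supported on two coordinates, while
`(eⱼ, αⱼ, 1)` is a codeword of weight `3`. -/

open Matrix

theorem Fin.eq_castSucc_castSucc_or_eq_castSucc_last_or_eq_last {n : ℕ} (i : Fin (n + 1 + 1)) :
    (∃ j : Fin n, i = j.castSucc.castSucc) ∨ i = (Fin.last n).castSucc ∨ i = Fin.last (n + 1) := by
  rcases Fin.eq_castSucc_or_eq_last i with ⟨i, rfl⟩ | rfl
  · rcases Fin.eq_castSucc_or_eq_last i with ⟨i, rfl⟩ | rfl <;> simp
  · simp

section ParityCheck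

variable {K ι : Type*} [Field K] [Fintype ι]

theorem eq_zero_of_dotProduct_eq_zero_of_support_subset_pair {u v c : ι → K} {a b : ι}
    (hdet : u a * v b - u b * v a ≠ 0) (hu : u ⬝ᵥ c = 0) (hv : v ⬝ᵥ c = 0)
    (hc : ∀ i, i ≠ a → i ≠ b → c i = 0) : c = 0 := by
  have hab : a ≠ b := by rintro rfl; exact hdet (sub_self _)
  have hsum (w : ι → K) : w ⬝ᵥ c = w a * c a + w b * c b :=
    Fintype.sum_eq_add a b hab fun i hi => by simp [hc i hi.1 hi.2]
  rw [hsum] at hu hv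
  have hca : (u a * v b - u b * v a) * c a = 0 := by linear_combination v b * hu - u b * hv
  have hcb : (u a * v b - u b * v a) * c b = 0 := by linear_combination u a * hv - v a * hu
  ext i
  by_cases hia : i = a
  · subst hia; simpa [hdet] using hca
  by_cases hib : i = b
  · subst hib; simpa [hdet] using hcb
  exact hc i hia hib

theorem three_le_hammingNorm_of_dotProduct_eq_zero [DecidableEq K] (hι : 2 ≤ Fintype.card ι)
    {u v : ι → K} (hdet : ∀ i j, i ≠ j → u i * v j - u j * v i ≠ 0) {c : ι → K}
    (hu : u ⬝ᵥ c = 0) (hv : v ⬝ᵥ c = 0) (hc : c ≠ 0) : 3 ≤ hammingNorm c := by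
  classical
  by_contra! hlt
  obtain ⟨t, hsupp, ht⟩ := Finset.exists_superset_card_eq (s := {i | c i ≠ 0})
    (Nat.le_of_lt_succ hlt) hι
  obtain ⟨a, b, hab, rfl⟩ := Finset.card_eq_two.mp ht
  refine hc (eq_zero_of_dotProduct_eq_zero_of_support_subset_pair (hdet a b hab) hu hv
    fun i hia hib => ?_)
  by_contra hci
  simpa [hia, hib] using hsupp (Finset.mem_filter.mpr ⟨Finset.mem_univ i, hci⟩)

end ParityCheck

section SystematicEncoder

variable {K : Type*} [Field K] {k : ℕ} (α : Fin k → K)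

def systematicEncoder : (Fin k → K) →ₗ[K] (Fin (k + 1 + 1) → K) :=
  LinearMap.pi <| Fin.snoc (Fin.snoc (LinearMap.proj (R := K)) (∑ i, α i • LinearMap.proj i))
    (∑ i, LinearMap.proj i)

theorem systematicEncoder_apply (y : Fin k → K) :
    systematicEncoder α y = Fin.snoc (Fin.snoc y (α ⬝ᵥ y)) (∑ i, y i) := by
  ext i
  rcases Fin.eq_castSucc_castSucc_or_eq_castSucc_last_or_eq_last i with ⟨i, rfl⟩ | rfl | rfl <;>
    simp [systematicEncoder, dotProduct]

theorem systematicEncoder_injective : Function.Injective (systematicEncoder α) := by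
  intro y z h
  ext i
  simpa [systematicEncoder_apply] using congrFun h i.castSucc.castSucc

variable {α}

theorem three_le_hammingNorm_systematicEncoder [DecidableEq K] (hα : ∀ i, α i ≠ 0)
    (hαd : Function.Injective α) {y : Fin k → K} (hy : y ≠ 0) :
    3 ≤ hammingNorm (systematicEncoder α y) := by
  refine three_le_hammingNorm_of_dotProduct_eq_zero (u := Fin.snoc (Fin.snoc α (-1)) 0)
    (v := Fin.snoc (Fin.snoc 1 0) (-1)) (by simp) ?_ ?_ ?_
    ((map_ne_zero_iff _ (systematicEncoder_injective α)).mpr hy)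
  · intro i j hij
    rcases Fin.eq_castSucc_castSucc_or_eq_castSucc_last_or_eq_last i with ⟨i, rfl⟩ | rfl | rfl <;>
    rcases Fin.eq_castSucc_castSucc_or_eq_castSucc_last_or_eq_last j with ⟨j, rfl⟩ | rfl | rfl <;>
    simp_all [sub_eq_zero, hαd.eq_iff]
  · simp [systematicEncoder_apply, dotProduct, Fin.sum_univ_castSucc]
  · simp [systematicEncoder_apply, dotProduct, Fin.sum_univ_castSucc]

theorem hammingNorm_systematicEncoder_single [DecidableEq K] (hα : ∀ i, α i ≠ 0) (j : Fin k) :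
    hammingNorm (systematicEncoder α (Pi.single j 1)) = 3 := by
  simp [hammingNorm, systematicEncoder_apply, Finset.card_filter, Fin.sum_univ_castSucc,
    Pi.single_apply, hα j]

end SystematicEncoder

theorem LinearMap.BilinForm.Nondegenerate.pi_flip_surjective {K V ι : Type*} [Field K]
    [AddCommGroup V] [Module K V] [FiniteDimensional K V] [Fintype ι] {B : LinearMap.BilinForm K V}
    (hB : B.Nondegenerate) {d : ι → V} (hd : LinearIndependent K d) :
    Function.Surjective (LinearMap.pi fun i => B.flip (d i)) := by
  have h : LinearMap.pi (fun i => B.flip (d i)) = (Module.piEquiv ι K K).symm.toLinearMap ∘ₗ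
      (Fintype.linearCombination K d).dualMap ∘ₗ (B.toDual hB).toLinearMap := by
    ext x : 1
    apply (Module.piEquiv ι K K).injective
    ext y
    simp [Module.piEquiv_apply_apply, LinearMap.BilinForm.toDual_def,
      Fintype.linearCombination_apply]
  rw [h]
  exact (Module.piEquiv ι K K).symm.surjective.comp
    ((LinearMap.dualMap_surjective_of_injective hd.fintypeLinearCombination_injective).comp
      (B.toDual hB).surjective)

section TraceCode

variable (p m : ℕ) [Fact p.Prime]

theorem traceCodeSet_eq_range (n : ℕ) (d : Fin n → GaloisField p m) :
    traceCodeSet p m n d = LinearMap.range (traceCodeMap p m n d) := by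
  ext c
  simp [traceCodeSet, eq_comm, funext_iff, traceCodeMap]

theorem traceCodeMap_surjective {k : ℕ} {d : Fin k → GaloisField p m}
    (hd : LinearIndependent (ZMod p) d) : Function.Surjective (traceCodeMap p m k d) :=
  (traceForm_nondegenerate (ZMod p) (GaloisField p m)).pi_flip_surjective hd

theorem traceCodeMap_mdsTuple {k : ℕ} (d : Fin k → GaloisField p m) (α : Fin k → ZMod p) :
    traceCodeMap p m (k + 1 + 1) (mdsTuple p m k d α) =
      systematicEncoder α ∘ₗ traceCodeMap p m k d := by
  ext x i
  rcases Fin.eq_castSucc_castSucc_or_eq_castSucc_last_or_eq_last i with ⟨i, rfl⟩ | rfl | rfl <;>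
    simp [traceCodeMap, mdsTuple, systematicEncoder_apply, dotProduct, Finset.mul_sum,
      ← Algebra.smul_def]

theorem range_traceCodeMap_mdsTuple {k : ℕ} {d : Fin k → GaloisField p m}
    (hd : LinearIndependent (ZMod p) d) (α : Fin k → ZMod p) :
    LinearMap.range (traceCodeMap p m (k + 1 + 1) (mdsTuple p m k d α)) =
      LinearMap.range (systematicEncoder α) := by
  rw [traceCodeMap_mdsTuple, LinearMap.range_comp_of_range_eq_top _
    (LinearMap.range_eq_top.mpr (traceCodeMap_surjective p m hd))]

end TraceCode

theorem mds_k_plus_two_construction_general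
    (p m k : ℕ) [Fact p.Prime] (hk : 0 < k)
    (d : Fin k → GaloisField p m) (hli : LinearIndependent (ZMod p) d)
    (α : Fin k → ZMod p) (hα : ∀ i, α i ≠ 0) (hαd : Function.Injective α) :
    Module.finrank (ZMod p)
        (LinearMap.range (traceCodeMap p m (k + 1 + 1) (mdsTuple p m k d α))) = k ∧
    (∀ c ∈ traceCodeSet p m (k + 1 + 1) (mdsTuple p m k d α), c ≠ 0 → 3 ≤ hammingNorm c) ∧
    (∃ c ∈ traceCodeSet p m (k + 1 + 1) (mdsTuple p m k d α), hammingNorm c = 3) := by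
  rw [traceCodeSet_eq_range, range_traceCodeMap_mdsTuple p m hli α]
  refine ⟨?_, ?_, ?_⟩
  · rw [LinearMap.finrank_range_of_inj (systematicEncoder_injective α), Module.finrank_fin_fun]
  · rintro _ ⟨y, rfl⟩ hc
    exact three_le_hammingNorm_systematicEncoder hα hαd (by rintro rfl; simp at hc)
  · exact ⟨_, ⟨Pi.single ⟨0, hk⟩ 1, rfl⟩, hammingNorm_systematicEncoder_single hα _⟩

/-- With `p > k ≥ 1`, `d₁,…,d_k` linearly independent over `𝔽_p`,
pairwise distinct nonzero `α₁,…,α_k ∈ 𝔽_p`, `d_{k+1} = ∑ αᵢ dᵢ` and `d_{k+2} = ∑ dᵢ`,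
the code `C_D` is a `[k+2, k, 3]` MDS linear code over `𝔽_p`. -/
theorem mds_k_plus_two_construction
    (p m k : ℕ) [Fact p.Prime] (hm : 0 < m) (hk : 0 < k) (hkp : k < p)
    (d : Fin k → GaloisField p m) (hli : LinearIndependent (ZMod p) d)
    (α : Fin k → ZMod p) (hα : ∀ i, α i ≠ 0) (hαd : Function.Injective α) :
    Module.finrank (ZMod p)
        (LinearMap.range (traceCodeMap p m (k + 1 + 1) (mdsTuple p m k d α))) = k ∧
    (∀ c ∈ traceCodeSet p m (k + 1 + 1) (mdsTuple p m k d α), c ≠ 0 → 3 ≤ hammingNorm c) ∧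
    (∃ c ∈ traceCodeSet p m (k + 1 + 1) (mdsTuple p m k d α), hammingNorm c = 3) :=
  mds_k_plus_two_construction_general p m k hk d hli α hα hαd
end
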